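/- Fix β = 5√2 and for m, k ≥ 1 let Λ(m,k) := {(a_1,…,a_k) ∈ (ℤ[i]\{0,±1,±i})^k : ∏_{j=1}^k ‖a_j‖ ≤ m β^{k−1}}. Then for all m ≥ 2 and n ≥ 1, #Λ(m,n) ≤ m² · 8^n · β^{2(n−1)} · (1 + n log β + log m)^{n−1}. -/

import Mathlib

/-- `‖a‖ = max |Re a| |Im a|` for a Gaussian integer `a`, as a real number. -/
noncomputable def gnorm (a : GaussianInt) : ℝ := max |(a.re : ℝ)| |(a.im : ℝ)|

/-- Membership in `𝒟 = {a ∈ ℤ[i] : |a| ≥ √2}`. -/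
noncomputable def inD (a : GaussianInt) : Prop :=
  Real.sqrt 2 ≤ Real.sqrt ((Zsqrtd.norm a : ℝ))

/-- `β = 5√2`. -/
noncomputable def beta : ℝ := 5 * Real.sqrt 2

/-- `Λ(m,k)`: words `(a₁,…,a_k) ∈ 𝒟^k` with `∏_j ‖a_j‖ ≤ m β^(k-1)`. -/
def Lam (m k : ℕ) : Set (List GaussianInt) :=
  {l | l.length = k ∧ (∀ a ∈ l, inD a) ∧
    (l.map gnorm).prod ≤ (m : ℝ) * beta ^ (k - 1)}


/-! Every letter `a ∈ 𝒟` has `‖a‖ ≥ 1`, and `‖a‖ = j ≥ 1` holds for exactly `8j` Gaussian integers. Let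
`W_k(T)` count the words in `𝒟` of length `k` whose norms multiply to at most `T`, so that
`#Λ(m,n) = W_n(m β^(n-1))`. Peeling off the first letter `a` leaves a word with product at most `T / ‖a‖`,
whence `W_{k+1}(T) ≤ ∑_{j ≤ T} 8j · W_k(T / j)`. By induction `W_k(T) ≤ 8ᵏ T² (1 + log T)^(k-1)`: each
step costs a harmonic sum `∑_{j ≤ T} 1/j ≤ 1 + log T`. -/

def supNorm (a : GaussianInt) : ℕ := max a.re.natAbs a.im.natAbs

lemma gnorm_eq_supNorm (a : GaussianInt) : gnorm a = supNorm a := by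
  simp only [gnorm, supNorm, Nat.cast_max, Nat.cast_natAbs, Int.cast_abs]

lemma one_le_supNorm {a : GaussianInt} (ha : a ≠ 0) : 1 ≤ supNorm a := by
  by_contra! h
  simp only [supNorm, Nat.lt_one_iff, Nat.max_eq_zero_iff, Int.natAbs_eq_zero] at h
  exact ha (Zsqrtd.ext h.1 h.2)

lemma ne_zero_of_inD {a : GaussianInt} (ha : inD a) : a ≠ 0 := by
  rintro rfl
  simp only [inD, Zsqrtd.norm_zero, Int.cast_zero, Real.sqrt_zero] at ha
  exact ha.not_gt (by positivity)

lemma one_le_gnorm {a : GaussianInt} (ha : inD a) : 1 ≤ gnorm a := by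
  rw [gnorm_eq_supNorm]
  exact_mod_cast one_le_supNorm (ne_zero_of_inD ha)

lemma one_le_beta : 1 ≤ beta := by
  have : 1 ≤ Real.sqrt 2 := Real.one_le_sqrt.mpr (by norm_num)
  unfold beta
  linarith

noncomputable def box (n : ℕ) : Finset GaussianInt :=
  (Finset.Icc (-(n : ℤ)) n ×ˢ Finset.Icc (-(n : ℤ)) n).image fun p => ⟨p.1, p.2⟩

lemma mem_box {a : GaussianInt} {n : ℕ} : a ∈ box n ↔ supNorm a ≤ n := by
  simp only [box, supNorm, Finset.mem_image, Finset.mem_product, Finset.mem_Icc, Prod.exists]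
  constructor
  · rintro ⟨x, y, ⟨⟨hx1, hx2⟩, hy1, hy2⟩, rfl⟩
    dsimp only
    omega
  · intro h
    exact ⟨a.re, a.im, ⟨⟨by omega, by omega⟩, by omega, by omega⟩, rfl⟩

lemma card_box (n : ℕ) : (box n).card = (2 * n + 1) ^ 2 := by
  rw [box, Finset.card_image_of_injective _ fun p q h =>
    Prod.ext (congrArg Zsqrtd.re h) (congrArg Zsqrtd.im h), Finset.card_product, Int.card_Icc]
  have : ((n : ℤ) + 1 - -(n : ℤ)).toNat = 2 * n + 1 := by omega
  rw [this, sq]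

noncomputable def shell (j : ℕ) : Finset GaussianInt := box j \ box (j - 1)

lemma mem_shell_supNorm {a : GaussianInt} (ha : a ≠ 0) : a ∈ shell (supNorm a) := by
  have := one_le_supNorm ha
  simp only [shell, Finset.mem_sdiff, mem_box]
  omega

lemma card_shell {j : ℕ} (hj : 1 ≤ j) : (shell j).card = 8 * j := by
  obtain ⟨i, rfl⟩ := Nat.exists_eq_add_of_le' hj
  have hsub : box i ⊆ box (i + 1) := fun a ha => mem_box.mpr (by have := mem_box.mp ha; omega)
  rw [shell, Nat.add_sub_cancel, Finset.card_sdiff_of_subset hsub, card_box, card_box]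
  apply Nat.sub_eq_of_eq_add
  ring

def words (k : ℕ) (T : ℝ) : Set (List GaussianInt) :=
  {l | l.length = k ∧ (∀ a ∈ l, inD a) ∧ (l.map gnorm).prod ≤ T}

lemma words_zero_subset (T : ℝ) : words 0 T ⊆ {[]} := fun _ hl =>
  List.eq_nil_of_length_eq_zero hl.1

def shellCover (k : ℕ) (T : ℝ) : Set (List GaussianInt) :=
  ⋃ j ∈ Finset.Icc 1 ⌊T⌋₊,
    (fun p => p.1 :: p.2) '' ((shell j : Set GaussianInt) ×ˢ words k (T / j))

lemma words_succ_subset_shellCover (k : ℕ) (T : ℝ) : words (k + 1) T ⊆ shellCover k T := by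
  rintro (_ | ⟨a, t⟩) ⟨hlen, hD, hprod⟩
  · simp at hlen
  simp only [List.forall_mem_cons, List.map_cons, List.prod_cons] at hD hprod
  have hj : (1 : ℝ) ≤ supNorm a := by exact_mod_cast one_le_supNorm (ne_zero_of_inD hD.1)
  have ht : 1 ≤ (t.map gnorm).prod :=
    List.one_le_prod (by simpa using fun b hb => one_le_gnorm (hD.2 b hb))
  rw [gnorm_eq_supNorm] at hprod
  have hjT : (supNorm a : ℝ) ≤ T := le_trans (by nlinarith) hprod
  refine Set.mem_biUnion (x := supNorm a) ?_
    ⟨(a, t), ⟨mem_shell_supNorm (ne_zero_of_inD hD.1), ?_⟩, rfl⟩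
  · exact Finset.mem_Icc.mpr ⟨by exact_mod_cast hj, Nat.le_floor hjT⟩
  · exact ⟨by simpa using hlen, hD.2, by rw [le_div_iff₀ (by linarith)]; linarith⟩

lemma shellCover_finite (k : ℕ) (T : ℝ) (h : ∀ T', (words k T').Finite) :
    (shellCover k T).Finite :=
  (Finset.Icc 1 ⌊T⌋₊).finite_toSet.biUnion fun j _ =>
    ((shell j).finite_toSet.prod (h _)).image _

lemma words_finite (k : ℕ) (T : ℝ) : (words k T).Finite := by
  induction k generalizing T with
  | zero => exact (Set.finite_singleton _).subset (words_zero_subset T)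
  | succ k ih => exact (shellCover_finite k T ih).subset (words_succ_subset_shellCover k T)

lemma ncard_words_succ_le (k : ℕ) (T : ℝ) :
    (words (k + 1) T).ncard ≤ ∑ j ∈ Finset.Icc 1 ⌊T⌋₊, 8 * j * (words k (T / j)).ncard := by
  refine (Set.ncard_le_ncard (words_succ_subset_shellCover k T)
    (shellCover_finite k T (words_finite k))).trans ?_
  refine (Finset.set_ncard_biUnion_le _ _).trans (Finset.sum_le_sum fun j hj => ?_)
  calc _ ≤ ((shell j : Set GaussianInt) ×ˢ words k (T / j)).ncard :=
        Set.ncard_image_le ((shell j).finite_toSet.prod (words_finite k _))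
    _ = 8 * j * (words k (T / j)).ncard := by
        rw [Set.ncard_prod, Set.ncard_coe_finset, card_shell (Finset.mem_Icc.mp hj).1]

lemma ncard_words_one_le {T : ℝ} (hT : 0 ≤ T) : ((words 1 T).ncard : ℝ) ≤ 8 * T ^ 2 := by
  have hcount : (words 1 T).ncard ≤ 8 * ⌊T⌋₊ * ⌊T⌋₊ :=
    calc _ ≤ ∑ j ∈ Finset.Icc 1 ⌊T⌋₊, 8 * j * (words 0 (T / j)).ncard := ncard_words_succ_le 0 T
      _ ≤ ∑ _j ∈ Finset.Icc 1 ⌊T⌋₊, 8 * ⌊T⌋₊ := Finset.sum_le_sum fun j hj => by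
          have hw : (words 0 (T / j)).ncard ≤ 1 :=
            (Set.ncard_le_ncard (words_zero_subset _)).trans (Set.ncard_singleton _).le
          have hjT := (Finset.mem_Icc.mp hj).2
          nlinarith
      _ = 8 * ⌊T⌋₊ * ⌊T⌋₊ := by
          rw [Finset.sum_const, Nat.card_Icc, Nat.add_sub_cancel, smul_eq_mul, mul_comm]
  have hfloor : (⌊T⌋₊ : ℝ) ≤ T := Nat.floor_le hT
  calc ((words 1 T).ncard : ℝ) ≤ 8 * ⌊T⌋₊ * ⌊T⌋₊ := by exact_mod_cast hcount
    _ ≤ 8 * T ^ 2 := by nlinarith [Nat.cast_nonneg (α := ℝ) ⌊T⌋₊]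

lemma sum_Icc_floor_inv_le_one_add_log {T : ℝ} (hT : 1 ≤ T) :
    ∑ j ∈ Finset.Icc 1 ⌊T⌋₊, (j : ℝ)⁻¹ ≤ 1 + Real.log T := by
  have h := harmonic_floor_le_one_add_log T hT
  rw [harmonic_eq_sum_Icc] at h
  push_cast at h
  exact h

lemma eight_mul_bound_div_le (k : ℕ) {T x : ℝ} (hx : 1 ≤ x) (hxT : x ≤ T) :
    8 * x * (8 ^ k * (T / x) ^ 2 * (1 + Real.log (T / x)) ^ (k - 1)) ≤
      8 ^ (k + 1) * T ^ 2 * (1 + Real.log T) ^ (k - 1) * x⁻¹ := by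
  have hlog : 0 ≤ Real.log (T / x) := Real.log_nonneg ((one_le_div₀ (by linarith)).mpr hxT)
  have hlog' : Real.log (T / x) ≤ Real.log T :=
    Real.log_le_log (div_pos (by linarith) (by linarith)) (div_le_self (by linarith) hx)
  calc _ = 8 ^ (k + 1) * T ^ 2 * (1 + Real.log (T / x)) ^ (k - 1) * x⁻¹ := by
        field_simp
        ring
    _ ≤ _ := by gcongr

lemma ncard_words_le {k : ℕ} (hk : 1 ≤ k) {T : ℝ} (hT : 1 ≤ T) :
    ((words k T).ncard : ℝ) ≤ 8 ^ k * T ^ 2 * (1 + Real.log T) ^ (k - 1) := by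
  induction k, hk using Nat.le_induction generalizing T with
  | base => simpa using ncard_words_one_le (by linarith : 0 ≤ T)
  | succ k hk ih =>
    set B := 8 ^ (k + 1) * T ^ 2 * (1 + Real.log T) ^ (k - 1)
    calc ((words (k + 1) T).ncard : ℝ)
        ≤ ∑ j ∈ Finset.Icc 1 ⌊T⌋₊, 8 * (j : ℝ) * (words k (T / j)).ncard := by
          exact_mod_cast ncard_words_succ_le k T
      _ ≤ ∑ j ∈ Finset.Icc 1 ⌊T⌋₊, B * (j : ℝ)⁻¹ := Finset.sum_le_sum fun j hj => by
          obtain ⟨hj, hjT⟩ := Finset.mem_Icc.mp hj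
          have hx : (1 : ℝ) ≤ j := by exact_mod_cast hj
          have hxT : (j : ℝ) ≤ T := (Nat.le_floor_iff (by linarith)).mp hjT
          calc _ ≤ 8 * (j : ℝ) * (8 ^ k * (T / j) ^ 2 * (1 + Real.log (T / j)) ^ (k - 1)) := by
                gcongr
                exact ih ((one_le_div₀ (by linarith)).mpr hxT)
            _ ≤ _ := eight_mul_bound_div_le k hx hxT
      _ = B * ∑ j ∈ Finset.Icc 1 ⌊T⌋₊, (j : ℝ)⁻¹ := (Finset.mul_sum _ _ _).symm
      _ ≤ B * (1 + Real.log T) := by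
          have := Real.log_nonneg hT
          gcongr
          exact sum_Icc_floor_inv_le_one_add_log hT
      _ = 8 ^ (k + 1) * T ^ 2 * (1 + Real.log T) ^ (k + 1 - 1) := by
          obtain ⟨i, rfl⟩ := Nat.exists_eq_add_of_le' hk
          simp only [B, Nat.add_sub_cancel, pow_succ]
          ring

/-- For `m ≥ 2` and `n ≥ 1`,
`#Λ(m,n) ≤ m² 8ⁿ β^{2(n-1)} (1 + n log β + log m)^{n-1}`. -/
theorem stmt12 (m n : ℕ) (hm : 2 ≤ m) (hn : 1 ≤ n) :
    (Nat.card (Lam m n) : ℝ) ≤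
      (m : ℝ) ^ 2 * 8 ^ n * beta ^ (2 * (n - 1)) *
        (1 + n * Real.log beta + Real.log m) ^ (n - 1) := by
  have hm1 : (1 : ℝ) ≤ m := by exact_mod_cast le_of_add_le_right hm
  have hβ : 1 ≤ beta ^ (n - 1) := one_le_pow₀ one_le_beta
  have hT : 1 ≤ (m : ℝ) * beta ^ (n - 1) := one_le_mul_of_one_le_of_one_le hm1 hβ
  have hlog : Real.log ((m : ℝ) * beta ^ (n - 1)) ≤ n * Real.log beta + Real.log m := by
    rw [Real.log_mul (by positivity) (by positivity), Real.log_pow, add_comm]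
    gcongr
    · exact Real.log_nonneg one_le_beta
    · exact_mod_cast n.sub_le 1
  calc (Nat.card (Lam m n) : ℝ) = (words n (m * beta ^ (n - 1))).ncard := rfl
    _ ≤ 8 ^ n * (m * beta ^ (n - 1)) ^ 2 * (1 + Real.log (m * beta ^ (n - 1))) ^ (n - 1) :=
        ncard_words_le hn hT
    _ = (m : ℝ) ^ 2 * 8 ^ n * beta ^ (2 * (n - 1)) *
          (1 + Real.log (m * beta ^ (n - 1))) ^ (n - 1) := by ring
    _ ≤ _ := by
        have := Real.log_nonneg hT
        have := zero_lt_one.trans_le one_le_beta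
        gcongr _ * ?_ ^ _
        linarith
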